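/- arXiv:2412.13759 — 2 statements merged into one kernel-verified Lean document; each statement's English description precedes it below -/
import Mathlib

section
/- Let X be a complete metric space, E₀ ⊆ X a nonempty compact set, {R_t}_{t=1}^N an IRS on E₀ with attractor K := ⋂_{n=0}^∞ E_n, where E_{n+1} := ⋃_{t=1}^N R_t(E_n). Suppose there exists a GIFS G = (V,E) of contractions {f_e}_{e∈E} associated to {R_t}_{t=1}^N on E_{k₀} (for some k₀ ≥ 0), with compact pieces W₁,…,W_m. Then K equals the attractor of G, i.e. K = ⋂_{q=1}^∞ ⋃_{i,j=1}^m ⋃_{e∈E_q^{i,j}} f_e(W_j). -/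
open Set

/-- The image of a set `F` under a relation `R` (viewed as a set-valued map):
`R(F) := ⋃_{x ∈ F} R(x)`. -/
def relImage {X : Type*} (R : X → Set X) (F : Set X) : Set X := ⋃ x ∈ F, R x

/-- `f` is a contraction on the set `A` (Lipschitz on `A` with some constant `c < 1`). -/
def IsContractionOn {X : Type*} [MetricSpace X] (f : X → X) (A : Set X) : Prop :=
  ∃ c : ℝ, 0 ≤ c ∧ c < 1 ∧ ∀ x ∈ A, ∀ y ∈ A, dist (f x) (f y) ≤ c * dist x y

/-- The restriction of the relation `R` to `F` is decomposed as the finite family of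
contractions `{f l i : A i → f l i (A i)}`: the sets `A i` cover `F`, each `f l i` is a
contraction on `A i`, each `f l i` is a branch of `R` (i.e. `f l i x ∈ R x`), and
`⋃ i R(A i) = ⋃_{l,i} f l i (A i)`. -/
def DecomposedAsContractions {X : Type*} [MetricSpace X] (R : X → Set X) (F : Set X)
    {L I : ℕ} (f : Fin L → Fin I → X → X) (A : Fin I → Set X) : Prop :=
  (⋃ i, A i) = F ∧
  (∀ l i, IsContractionOn (f l i) (A i)) ∧
  (∀ l i, ∀ x ∈ A i, f l i x ∈ R x) ∧
  (⋃ i, relImage R (A i)) = ⋃ l, ⋃ i, f l i '' (A i)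

/-- Iterated set-image `R_{t₁} R_{t₂} ⋯ R_{t_q}(F)` of a word `w = (t₁, …, t_q)`. -/
def relCompImage {X : Type*} {N : ℕ} (R : Fin N → X → Set X) :
    List (Fin N) → Set X → Set X
  | [], F => F
  | t :: w, F => relImage (R t) (relCompImage R w F)

/-- For a directed path `e = (e₁, …, e_q)` of edges, the image
`f_{e₁} ∘ ⋯ ∘ f_{e_q}(S)`. -/
def pathImage {X : Type*} {nE : ℕ} (f : Fin nE → X → X) : List (Fin nE) → Set X → Set X
  | [], S => S
  | e :: es, S => f e '' pathImage f es S

/-- There exists a graph-directed iterated function system (GIFS) associated to the IRS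
`{R_t}_{t=1}^N` on the set `Ek`: a directed multigraph on vertices `Fin m` with edges
`Fin nE` (with source/target maps `src`, `dst`), a contraction `f e` for every edge, and
compact sets `W j` with `⋃ j W j = Ek` such that for every `q ≥ 1`,
`⋃_{(t₁,…,t_q)} R_{t₁}⋯R_{t_q}(Ek) = ⋃_{i,j} ⋃_{e ∈ E_q^{i,j}} f_e(W j)`. -/
def IsGIFSAssociated {X : Type*} [MetricSpace X] {N : ℕ}
    (R : Fin N → X → Set X) (Ek : Set X) : Prop :=
  ∃ (m nE : ℕ) (src dst : Fin nE → Fin m) (f : Fin nE → X → X) (W : Fin m → Set X),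
    0 < m ∧
    (∀ j, IsCompact (W j)) ∧
    (⋃ j, W j) = Ek ∧
    (∀ e, IsContractionOn (f e) Set.univ) ∧
    (∀ q : ℕ, 0 < q →
      (⋃ w : List (Fin N), ⋃ (_ : w.length = q), relCompImage R w Ek) =
      ⋃ es : List (Fin nE),
        ⋃ (_ : es.length = q ∧ es.Chain' fun a b => dst a = src b),
        ⋃ j : Fin m, ⋃ (_ : ∀ hne : es ≠ [], dst (es.getLast hne) = j),
          pathImage f es (W j))

lemma relImage_iUnion {X : Type*} (R : X → Set X) {ι : Sort*} (F : ι → Set X) :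
    relImage R (⋃ i, F i) = ⋃ i, relImage R (F i) := by
  ext x
  simp only [relImage, Set.mem_iUnion]
  constructor
  · rintro ⟨y, ⟨i, hy⟩, hx⟩; exact ⟨i, y, hy, hx⟩
  · rintro ⟨i, y, hy, hx⟩; exact ⟨y, ⟨i, hy⟩, hx⟩

/-- Proposition 3.2 of the paper.  If `G = (V,E)` is a GIFS of
contractions associated to the IRS `{R_t}_{t=1}^N` on `E_{k₀}`, then the attractor
`K = ⋂_n E_n` of the IRS equals the attractor
`⋂_{q ≥ 1} ⋃_{i,j} ⋃_{e ∈ E_q^{i,j}} f_e(W_j)` of `G`. -/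
theorem irs_attractor_eq_gifs_attractor
    {X : Type*} [MetricSpace X] [CompleteSpace X]
    {N : ℕ} (hN : 0 < N) (R : Fin N → X → Set X) (E₀ : Set X)
    (hE₀ne : E₀.Nonempty) (hE₀cpt : IsCompact E₀)
    (hIRSa : ∀ F : Set X, F ⊆ E₀ → F.Nonempty → IsCompact F → ∀ t : Fin N,
      (relImage (R t) F).Nonempty ∧ IsCompact (relImage (R t) F))
    (hIRSb : ∀ t : Fin N, relImage (R t) E₀ ⊆ E₀)
    (E : ℕ → Set X) (hE0 : E 0 = E₀)
    (hEsucc : ∀ n : ℕ, E (n + 1) = ⋃ t : Fin N, relImage (R t) (E n))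
    -- the GIFS data associated to `{R_t}` on `E_{k₀}`
    (k₀ : ℕ) (m nE : ℕ) (hm : 0 < m)
    (src dst : Fin nE → Fin m) (f : Fin nE → X → X) (W : Fin m → Set X)
    (hWcpt : ∀ j, IsCompact (W j))
    (hWcover : (⋃ j, W j) = E k₀)
    (hf : ∀ e, IsContractionOn (f e) Set.univ)
    (hassoc : ∀ q : ℕ, 0 < q →
      (⋃ w : List (Fin N), ⋃ (_ : w.length = q), relCompImage R w (E k₀)) =
      ⋃ es : List (Fin nE),
        ⋃ (_ : es.length = q ∧ es.Chain' fun a b => dst a = src b),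
        ⋃ j : Fin m, ⋃ (_ : ∀ hne : es ≠ [], dst (es.getLast hne) = j),
          pathImage f es (W j)) :
    (⋂ n : ℕ, E n) =
      ⋂ q : ℕ, ⋂ (_ : 0 < q),
        ⋃ es : List (Fin nE),
          ⋃ (_ : es.length = q ∧ es.Chain' fun a b => dst a = src b),
          ⋃ j : Fin m, ⋃ (_ : ∀ hne : es ≠ [], dst (es.getLast hne) = j),
            pathImage f es (W j) := by
  have hmono : ∀ (t : Fin N) (F G : Set X), F ⊆ G →
      relImage (R t) F ⊆ relImage (R t) G := by
    intro t F G hFG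
    simp only [relImage]
    exact Set.biUnion_subset_biUnion_left hFG
  have hdec : ∀ n : ℕ, E (n + 1) ⊆ E n := by
    intro n
    induction n with
    | zero =>
      rw [hEsucc, hE0]
      exact Set.iUnion_subset hIRSb
    | succ n ih =>
      rw [hEsucc (n + 1)]
      exact Set.iUnion_subset fun t =>
        (hmono t _ _ ih).trans (by rw [hEsucc n]; exact Set.subset_iUnion (fun t => relImage (R t) (E n)) t)
  have hanti : Antitone E := antitone_nat_of_succ_le hdec
  have hkey : ∀ q : ℕ, E (k₀ + q) =
      ⋃ w : List (Fin N), ⋃ (_ : w.length = q), relCompImage R w (E k₀) := by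
    intro q
    induction q with
    | zero =>
      rw [Nat.add_zero]
      ext x
      simp only [Set.mem_iUnion]
      constructor
      · intro h; exact ⟨[], rfl, h⟩
      · rintro ⟨w, hw, h⟩
        rw [List.length_eq_zero_iff] at hw
        subst hw
        exact h
    | succ q ih =>
      rw [show k₀ + (q + 1) = (k₀ + q) + 1 by omega, hEsucc, ih]
      simp only [relImage_iUnion]
      ext x
      simp only [Set.mem_iUnion]
      constructor
      · rintro ⟨t, w, hw, hx⟩
        exact ⟨t :: w, by simp [hw], hx⟩
      · rintro ⟨w, hw, hx⟩
        cases w with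
        | nil => simp at hw
        | cons t w' => exact ⟨t, w', by simpa using hw, hx⟩
  apply Set.Subset.antisymm
  · intro x hx
    simp only [Set.mem_iInter] at hx ⊢
    intro q hq
    rw [← hassoc q hq, ← hkey q]
    exact hx _
  · intro x hx
    simp only [Set.mem_iInter] at hx ⊢
    intro n
    have h1 : x ∈ E (k₀ + (n + 1)) := by
      rw [hkey (n + 1), hassoc (n + 1) (Nat.succ_pos n)]
      exact hx (n + 1) (Nat.succ_pos n)
    exact hanti (by omega : n ≤ k₀ + (n + 1)) h1
end

section
/- Let E₀ := [0,1]. For i ≥ 1 let F^i := [1 − 1/2^{2i−2}, 1 − 1/2^{2i−1}], and define f^{1,i}(x) := (1/2)x + (2^{2i−1}−2)/2^{2i} and f^{2,i}(x) := (1/3)x + (2^{2i+1}−8)/(3·2^{2i}) for x ∈ F^i. Let R₁ be the relation on E₀ with R₁(x) = {f^{1,i}(x), f^{2,i}(x)} for x ∈ F^i, R₁(x) = {x/4} for x ∈ E₀ ∖ (⋃_i F^i ∪ {1}), and R₁(1) = {0,1}. Then: (1) for every i, the left endpoint x_i := 1 − 1/2^{2i−2} of F^i satisfies f^{1,i}(x_i)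 = f^{2,i}(x_i) = x_i, so for any i ≠ j, every function f : F^i ∪ F^j → ℝ with f(x) ∈ R₁(x) for all x satisfies |f(x_i) − f(x_j)| = |x_i − x_j| and hence is not a contraction; and consequently (2) the restriction R₁|_{H₁}, where H₁ := (⋃_{i≥1} F^i) ∪ {1}, cannot be decomposed as a finite family of contractions. -/
open Set

/-- The interval `F^i = [1 - 1/2^{2i-2}, 1 - 1/2^{2i-1}]`. -/
noncomputable def F9 (i : ℕ) : Set ℝ :=
  Icc (1 - 1 / 2 ^ (2 * i - 2)) (1 - 1 / 2 ^ (2 * i - 1))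

/-- `f^{1,i}(x) = (1/2)x + (2^{2i-1} - 2)/2^{2i}`. -/
noncomputable def f9₁ (i : ℕ) (x : ℝ) : ℝ := 1 / 2 * x + (2 ^ (2 * i - 1) - 2) / 2 ^ (2 * i)

/-- `f^{2,i}(x) = (1/3)x + (2^{2i+1} - 8)/(3·2^{2i})`. -/
noncomputable def f9₂ (i : ℕ) (x : ℝ) : ℝ :=
  1 / 3 * x + (2 ^ (2 * i + 1) - 8) / (3 * 2 ^ (2 * i))

/-- `H₁ = (⋃_{i ≥ 1} F^i) ∪ {1}`. -/
noncomputable def H9 : Set ℝ := (⋃ i ∈ {i : ℕ | 1 ≤ i}, F9 i) ∪ {1}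

lemma fix1 (i : ℕ) (hi : 1 ≤ i) :
    f9₁ i (1 - 1 / 2 ^ (2 * i - 2)) = 1 - 1 / 2 ^ (2 * i - 2) := by
  obtain ⟨k, rfl⟩ : ∃ k, i = k + 1 := ⟨i - 1, by omega⟩
  have h2 : 2 * (k+1) - 2 = 2*k := by omega
  have h1 : 2 * (k+1) - 1 = 2*k+1 := by omega
  have h0 : 2 * (k+1) = 2*k+2 := by omega
  simp only [f9₁, h2, h1, h0, Nat.add_sub_cancel, show 2*k+2-1 = 2*k+1 by omega, pow_succ]
  have : (2:ℝ)^(2*k) ≠ 0 := by positivity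
  field_simp
  ring

lemma fix2 (i : ℕ) (hi : 1 ≤ i) :
    f9₂ i (1 - 1 / 2 ^ (2 * i - 2)) = 1 - 1 / 2 ^ (2 * i - 2) := by
  obtain ⟨k, rfl⟩ : ∃ k, i = k + 1 := ⟨i - 1, by omega⟩
  have h2 : 2 * (k+1) - 2 = 2*k := by omega
  have h0 : 2 * (k+1) = 2*k+2 := by omega
  simp only [f9₂, h2, h0, Nat.add_sub_cancel, pow_succ]
  have : (2:ℝ)^(2*k) ≠ 0 := by positivity
  field_simp
  ring

lemma xmem (i : ℕ) : (1 - 1 / 2 ^ (2 * i - 2) : ℝ) ∈ F9 i := by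
  refine ⟨le_refl _, ?_⟩
  gcongr
  · norm_num
  · omega

lemma xne (i j : ℕ) (hi : 1 ≤ i) (hj : 1 ≤ j) (hij : i ≠ j) :
    (1 - 1 / 2 ^ (2 * i - 2) : ℝ) ≠ (1 - 1 / 2 ^ (2 * j - 2) : ℝ) := by
  intro h
  have hp : ((2:ℝ) ^ (2 * i - 2)) = 2 ^ (2 * j - 2) := by
    field_simp at h
    linarith
  have := (pow_right_strictMono₀ (by norm_num : (1:ℝ) < 2)).injective hp
  omega

lemma Rx (R : ℝ → Set ℝ)
    (hRF : ∀ i : ℕ, 1 ≤ i → ∀ x ∈ F9 i, R x = {f9₁ i x, f9₂ i x})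
    (i : ℕ) (hi : 1 ≤ i) :
    R (1 - 1 / 2 ^ (2 * i - 2)) = {(1 - 1 / 2 ^ (2 * i - 2) : ℝ)} := by
  rw [hRF i hi _ (xmem i), fix1 i hi, fix2 i hi]
  simp

/-- Example 3.8 of the paper.  For the relation `R₁` on `[0,1]` with
`R₁(x) = {f^{1,i}(x), f^{2,i}(x)}` for `x ∈ F^i`, `R₁(x) = {x/4}` off `⋃ F^i ∪ {1}`,
and `R₁(1) = {0,1}`: the left endpoint of every `F^i` is a common fixed point of both
branches, any selection on `F^i ∪ F^j` preserves the distance of these endpoints and so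
is not a contraction on `F^i ∪ F^j`, and consequently `R₁|_{H₁}` cannot be decomposed
as a finite family of contractions. -/
theorem irs_restriction_not_decomposable
    (R : ℝ → Set ℝ)
    (hRF : ∀ i : ℕ, 1 ≤ i → ∀ x ∈ F9 i, R x = {f9₁ i x, f9₂ i x})
    (hRmid : ∀ x ∈ Icc (0 : ℝ) 1 \ H9, R x = {x / 4})
    (hR1 : R 1 = ({0, 1} : Set ℝ)) :
    -- (1) fixed points and non-contractivity of selections
    (∀ i : ℕ, 1 ≤ i →
      f9₁ i (1 - 1 / 2 ^ (2 * i - 2)) = 1 - 1 / 2 ^ (2 * i - 2) ∧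
      f9₂ i (1 - 1 / 2 ^ (2 * i - 2)) = 1 - 1 / 2 ^ (2 * i - 2)) ∧
    (∀ i j : ℕ, 1 ≤ i → 1 ≤ j → i ≠ j → ∀ f : ℝ → ℝ,
      (∀ x ∈ F9 i ∪ F9 j, f x ∈ R x) →
      |f (1 - 1 / 2 ^ (2 * i - 2)) - f (1 - 1 / 2 ^ (2 * j - 2))| =
        |(1 - 1 / 2 ^ (2 * i - 2)) - (1 - 1 / 2 ^ (2 * j - 2) : ℝ)| ∧
      ¬ IsContractionOn f (F9 i ∪ F9 j)) ∧
    -- (2) `R|_{H₁}` cannot be decomposed as a finite family of contractions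
    ¬ ∃ (L I : ℕ) (f : Fin L → Fin I → ℝ → ℝ) (A : Fin I → Set ℝ),
        DecomposedAsContractions R H9 f A := by
  refine ⟨fun i hi => ⟨fix1 i hi, fix2 i hi⟩, ?_, ?_⟩
  · intro i j hi hj hij f hf
    have hfi : f (1 - 1 / 2 ^ (2 * i - 2)) = 1 - 1 / 2 ^ (2 * i - 2) := by
      have := hf _ (Or.inl (xmem i))
      rwa [Rx R hRF i hi, mem_singleton_iff] at this
    have hfj : f (1 - 1 / 2 ^ (2 * j - 2)) = 1 - 1 / 2 ^ (2 * j - 2) := by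
      have := hf _ (Or.inr (xmem j))
      rwa [Rx R hRF j hj, mem_singleton_iff] at this
    refine ⟨by rw [hfi, hfj], ?_⟩
    rintro ⟨c, hc0, hc1, hlip⟩
    have := hlip _ (Or.inl (xmem i)) _ (Or.inr (xmem j))
    rw [hfi, hfj] at this
    have hd : 0 < dist (1 - 1 / 2 ^ (2 * i - 2) : ℝ) (1 - 1 / 2 ^ (2 * j - 2) : ℝ) :=
      dist_pos.mpr (xne i j hi hj hij)
    nlinarith
  · rintro ⟨L, I, f, A, hcover, hcontr, hsel, himg⟩
    have hxH : ∀ n : ℕ, (1 - 1 / 2 ^ (2 * (n+1) - 2) : ℝ) ∈ H9 := fun n =>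
      Or.inl (mem_iUnion₂.mpr ⟨n + 1, by simp, xmem (n+1)⟩)
    have hxA : ∀ n : ℕ, ∃ k : Fin I, (1 - 1 / 2 ^ (2 * (n+1) - 2) : ℝ) ∈ A k := by
      intro n
      have := hxH n
      rw [← hcover] at this
      exact mem_iUnion.mp this
    choose g hg using hxA
    obtain ⟨n, m, hnm, hgnm⟩ := Finite.exists_ne_map_eq_of_infinite g
    rcases Nat.eq_zero_or_pos L with hL | hL
    · subst hL
      have hmem : (1 - 1 / 2 ^ (2 * (n+1) - 2) : ℝ) ∈ ⋃ k, relImage R (A k) :=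
        mem_iUnion.mpr ⟨g n, mem_iUnion₂.mpr ⟨_, hg n,
          by rw [Rx R hRF (n+1) (by omega)]; exact rfl⟩⟩
      rw [himg] at hmem
      simpa using hmem
    · set l : Fin L := ⟨0, hL⟩
      have h1 : f l (g n) (1 - 1 / 2 ^ (2 * (n+1) - 2)) = 1 - 1 / 2 ^ (2 * (n+1) - 2) := by
        have := hsel l (g n) _ (hg n)
        rwa [Rx R hRF (n+1) (by omega), mem_singleton_iff] at this
      have h2 : f l (g n) (1 - 1 / 2 ^ (2 * (m+1) - 2)) = 1 - 1 / 2 ^ (2 * (m+1) - 2) := by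
        have := hsel l (g n) _ (hgnm ▸ hg m)
        rwa [Rx R hRF (m+1) (by omega), mem_singleton_iff] at this
      obtain ⟨c, hc0, hc1, hlip⟩ := hcontr l (g n)
      have := hlip _ (hg n) _ (hgnm ▸ hg m)
      rw [h1, h2] at this
      have hd : 0 < dist (1 - 1 / 2 ^ (2 * (n+1) - 2) : ℝ) (1 - 1 / 2 ^ (2 * (m+1) - 2) : ℝ) :=
        dist_pos.mpr (xne (n+1) (m+1) (by omega) (by omega) (by omega))
      nlinarith
end
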